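/- Let A be a positive definite n×n complex matrix and X an n×n complex matrix. Set α = ||A + X* A⁻¹ X|| and β = ||A + X A⁻¹ X*||. If α < β, then for every Hermitian matrix C with C ≥ X A⁻¹ X*, the operator norm of the block matrix [[A, X*], [X, C]] is at most ||A + C||. -/

import Mathlib

open scoped Matrix ComplexOrder

/-- The operator norm (largest singular value) of a square complex matrix. -/
noncomputable def opNorm {m : Type*} [Fintype m] [DecidableEq m] (M : Matrix m m ℂ) : ℝ :=
  ‖Matrix.toEuclideanCLM (𝕜 := ℂ) M‖

/-!
Write `H = [[A, X*], [X, C]]`. Its Schur complement `C - X A⁻¹ X*` is positive semidefinite,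
hence so is `H`. Moreover `H ≤ diag(A + X* A⁻¹ X, A + C)`: the difference
`[[X* A⁻¹ X, -X*], [-X, A]]` has Schur complement `0` with respect to `A`. As
`diag(P, Q) ≤ max ‖P‖ ‖Q‖ • 1` for Hermitian `P`, `Q`, this gives
`‖H‖ ≤ max ‖A + X* A⁻¹ X‖ ‖A + C‖`, and `‖A + X* A⁻¹ X‖ = α < β ≤ ‖A + C‖`
because `0 ≤ A + X A⁻¹ X* ≤ A + C`.
-/

open scoped MatrixOrder

namespace Matrix

variable {𝕜 m n : Type*} [RCLike 𝕜] [Fintype m] [Fintype n]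

theorem PosSemidef.fromBlocks_zero_zero {P : Matrix m m 𝕜} {Q : Matrix n n 𝕜}
    (hP : P.PosSemidef) (hQ : Q.PosSemidef) : (fromBlocks P 0 0 Q).PosSemidef := by
  rw [posSemidef_iff_dotProduct_mulVec] at *
  refine ⟨hP.1.fromBlocks (by simp) hQ.1, fun x => ?_⟩
  rw [← Sum.elim_comp_inl_inr x, fromBlocks_mulVec, dotProduct_block]
  simp only [Sum.elim_comp_inl, Sum.elim_comp_inr, zero_mulVec, add_zero, zero_add]
  exact add_nonneg (hP.2 _) (hQ.2 _)

theorem fromBlocks_zero_zero_le_fromBlocks_zero_zero {P P' : Matrix m m 𝕜}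
    {Q Q' : Matrix n n 𝕜} (hP : P ≤ P') (hQ : Q ≤ Q') :
    fromBlocks P 0 0 Q ≤ fromBlocks P' 0 0 Q' := by
  rw [le_iff] at *
  simpa [sub_eq_add_neg, fromBlocks_neg, fromBlocks_add] using hP.fromBlocks_zero_zero hQ

variable [DecidableEq m] [DecidableEq n]

theorem algebraMap_real_mono : Monotone (algebraMap ℝ (Matrix m m 𝕜)) := by
  intro r s hrs
  rw [le_iff, ← map_sub, Algebra.algebraMap_eq_smul_one]
  exact PosSemidef.one.smul (sub_nonneg.mpr hrs)

theorem algebraMap_real_eq_fromBlocks (r : ℝ) :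
    algebraMap ℝ (Matrix (m ⊕ n) (m ⊕ n) 𝕜) r =
      fromBlocks (algebraMap ℝ _ r) 0 0 (algebraMap ℝ _ r) := by
  simp only [algebraMap_eq_diagonal, fromBlocks_diagonal]
  congr 1
  ext (i | i) <;> rfl

theorem PosDef.fromBlocks_nonneg {A C : Matrix m m 𝕜} (hA : A.PosDef) {X : Matrix m m 𝕜}
    (hC : X * A⁻¹ * Xᴴ ≤ C) : 0 ≤ fromBlocks A Xᴴ X C := by
  have := hA.isUnit.invertible
  simpa using ((PosDef.fromBlocks₁₁ Xᴴ C hA).mpr (by simpa using le_iff.mp hC)).nonneg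

theorem PosDef.fromBlocks_le_fromBlocks_zero_zero {A : Matrix m m 𝕜} (hA : A.PosDef)
    (X C : Matrix m m 𝕜) :
    fromBlocks A Xᴴ X C ≤ fromBlocks (A + Xᴴ * A⁻¹ * X) 0 0 (A + C) := by
  have := hA.isUnit.invertible
  have hdiff : fromBlocks (A + Xᴴ * A⁻¹ * X) 0 0 (A + C) - fromBlocks A Xᴴ X C =
      fromBlocks (Xᴴ * A⁻¹ * X) (-Xᴴ) (-Xᴴ)ᴴ A := by
    ext (i | i) (j | j) <;> simp
  rw [le_iff, hdiff, PosDef.fromBlocks₂₂ _ _ hA]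
  simpa using PosSemidef.zero

end Matrix

open scoped Matrix.Norms.L2Operator

namespace Matrix

variable {m n : Type*} [Fintype m] [Fintype n] [DecidableEq m] [DecidableEq n]

theorem IsHermitian.le_algebraMap_of_norm_le {P : Matrix m m ℂ} (hP : P.IsHermitian) {r : ℝ}
    (hr : ‖P‖ ≤ r) : P ≤ algebraMap ℝ _ r :=
  hP.isSelfAdjoint.le_algebraMap_norm_self.trans (algebraMap_real_mono hr)

theorem norm_le_max_of_nonneg_of_le_fromBlocks {H : Matrix (m ⊕ n) (m ⊕ n) ℂ}
    {P : Matrix m m ℂ} {Q : Matrix n n ℂ} (hP : P.IsHermitian) (hQ : Q.IsHermitian)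
    (hH : 0 ≤ H) (hHPQ : H ≤ fromBlocks P 0 0 Q) : ‖H‖ ≤ max ‖P‖ ‖Q‖ := by
  rw [CStarAlgebra.norm_le_iff_le_algebraMap H (by positivity) hH, algebraMap_real_eq_fromBlocks]
  exact hHPQ.trans <| fromBlocks_zero_zero_le_fromBlocks_zero_zero
    (hP.le_algebraMap_of_norm_le (le_max_left _ _)) (hQ.le_algebraMap_of_norm_le (le_max_right _ _))

theorem norm_fromBlocks_le_max {A X C : Matrix m m ℂ} (hA : A.PosDef)
    (hC : X * A⁻¹ * Xᴴ ≤ C) :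
    ‖fromBlocks A Xᴴ X C‖ ≤ max ‖A + Xᴴ * A⁻¹ * X‖ ‖A + C‖ := by
  have hXAX : (X * A⁻¹ * Xᴴ).IsHermitian := isHermitian_mul_mul_conjTranspose X hA.inv.1
  have hC' : C.IsHermitian := by simpa using (le_iff.mp hC).1.add hXAX
  exact norm_le_max_of_nonneg_of_le_fromBlocks
    (hA.1.add (isHermitian_conjTranspose_mul_mul X hA.inv.1)) (hA.1.add hC')
    (hA.fromBlocks_nonneg hC) (hA.fromBlocks_le_fromBlocks_zero_zero X C)

end Matrix

theorem stmt_3 {n : ℕ} (A X : Matrix (Fin n) (Fin n) ℂ) (hA : A.PosDef)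
    (hαβ : opNorm (A + Xᴴ * A⁻¹ * X) < opNorm (A + X * A⁻¹ * Xᴴ)) :
    ∀ C : Matrix (Fin n) (Fin n) ℂ, C.IsHermitian → (C - X * A⁻¹ * Xᴴ).PosSemidef →
      opNorm (Matrix.fromBlocks A Xᴴ X C) ≤ opNorm (A + C) := by
  intro C _ hC
  simp only [opNorm, ← Matrix.cstar_norm_def] at hαβ ⊢
  have hβ : ‖A + X * A⁻¹ * Xᴴ‖ ≤ ‖A + C‖ :=
    CStarAlgebra.norm_le_norm_of_nonneg_of_le
      (hA.posSemidef.add (hA.inv.posSemidef.mul_mul_conjTranspose_same X)).nonneg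
      (add_le_add_right hC _)
  exact (Matrix.norm_fromBlocks_le_max hA hC).trans (max_le (hαβ.trans_le hβ).le le_rfl)
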